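/- The subspace topology induced by the metric ρ̂ on [0,∞) × X ⊂ X̂ coincides with the product topology on [0,∞) × X. -/

import Mathlib

open scoped NNReal ENNReal

/-- `g(s) = s/(s+1)`, mapping `[0,∞)` into `[0,1)`. -/
noncomputable def g (s : ℝ≥0) : ℝ := (s : ℝ) / ((s : ℝ) + 1)

/-- The metric `ρ̂` on `X̂ = ([0,∞) × X) ∪ {Δ∞}`, where `Δ∞` is encoded as `none`
and a pair `(s, x)` as `some (s, x)`. -/
noncomputable def hatDist {X : Type*} [MetricSpace X] :
    Option (ℝ≥0 × X) → Option (ℝ≥0 × X) → ℝ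
  | some p, some q => dist p.2 q.2 * (1 - max (g p.1) (g q.1)) + |g p.1 - g q.1|
  | some p, none => 1 - g p.1
  | none, some q => 1 - g q.1
  | none, none => 0

/-
Writing `d(q, p) = ρ(y, x) (1 - max(g t, g s)) + |g t - g s|` for `q = (t, y)`, `p = (s, x)`:
if `d(q, p) → 0` then both nonnegative summands tend to `0`; the second forces `g t → g s`,
hence `t = g t / (1 - g t) → s`, and then `1 - max(g t, g s) → 1 - g s > 0`, so dividing
the first summand by it gives `ρ(y, x) → 0`. Conversely `d(·, p)` is continuous and vanishes
at `p`. So `d(·, p)` generates the neighbourhood filter of `p` in the product topology.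
-/

open Filter Topology

lemma g_lt_one (s : ℝ≥0) : g s < 1 := by
  unfold g
  rw [div_lt_one (by positivity)]
  linarith

@[fun_prop]
lemma continuous_g : Continuous g :=
  NNReal.continuous_coe.div (by fun_prop) fun s => by positivity

lemma coe_eq_g_div_one_sub_g (s : ℝ≥0) : (s : ℝ) = g s / (1 - g s) := by
  unfold g
  have hs : (s : ℝ) + 1 ≠ 0 := by positivity
  field_simp
  ring

lemma hatDist_some_some {X : Type*} [MetricSpace X] (q p : ℝ≥0 × X) :
    hatDist (some q) (some p) = dist q.2 p.2 * (1 - max (g q.1) (g p.1)) + |g q.1 - g p.1| :=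
  rfl

section Convergence

variable {X α : Type*} [MetricSpace X] {l : Filter α} {f : α → ℝ≥0 × X} {p : ℝ≥0 × X}

lemma tendsto_of_tendsto_hatDist
    (hf : Tendsto (fun a => hatDist (some (f a)) (some p)) l (𝓝 0)) : Tendsto f l (𝓝 p) := by
  simp only [hatDist_some_some] at hf
  set u := fun a => g (f a).1
  have hweight (a : α) : 0 < 1 - max (u a) (g p.1) := by
    linarith [max_lt (g_lt_one (f a).1) (g_lt_one p.1)]
  have hdist_term : Tendsto (fun a => dist (f a).2 p.2 * (1 - max (u a) (g p.1))) l (𝓝 0) :=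
    squeeze_zero (fun a => mul_nonneg dist_nonneg (hweight a).le)
      (fun a => le_add_of_nonneg_right (abs_nonneg _)) hf
  have hg_term : Tendsto (fun a => |u a - g p.1|) l (𝓝 0) :=
    squeeze_zero (fun a => abs_nonneg _)
      (fun a => le_add_of_nonneg_left (mul_nonneg dist_nonneg (hweight a).le)) hf
  have hu : Tendsto u l (𝓝 (g p.1)) := by
    rw [tendsto_iff_dist_tendsto_zero]
    simpa only [Real.dist_eq] using hg_term
  have hweight_lim : Tendsto (fun a => 1 - max (u a) (g p.1)) l (𝓝 (1 - g p.1)) := by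
    have h := (tendsto_const_nhds (x := (1 : ℝ))).sub (hu.max (tendsto_const_nhds (x := g p.1)))
    rwa [max_self] at h
  have hne : 1 - g p.1 ≠ 0 := by linarith [g_lt_one p.1]
  have hfst : Tendsto (fun a => (f a).1) l (𝓝 p.1) := by
    rw [← NNReal.tendsto_coe]
    have h := hu.div (tendsto_const_nhds.sub hu) hne
    rw [← coe_eq_g_div_one_sub_g] at h
    exact h.congr fun a => (coe_eq_g_div_one_sub_g _).symm
  have hsnd : Tendsto (fun a => (f a).2) l (𝓝 p.2) := by
    rw [tendsto_iff_dist_tendsto_zero]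
    have h := hdist_term.div hweight_lim hne
    rw [zero_div] at h
    exact h.congr fun a => mul_div_cancel_right₀ _ (hweight a).ne'
  exact hfst.prodMk_nhds hsnd

lemma tendsto_hatDist_of_tendsto (hf : Tendsto f l (𝓝 p)) :
    Tendsto (fun a => hatDist (some (f a)) (some p)) l (𝓝 0) := by
  have hcont : Continuous fun q : ℝ≥0 × X => hatDist (some q) (some p) := by
    simp only [hatDist_some_some]
    fun_prop
  simpa [hatDist_some_some, Function.comp_def] using (hcont.tendsto p).comp hf

end Convergence

lemma comap_hatDist_nhds_zero {X : Type*} [MetricSpace X] (p : ℝ≥0 × X) :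
    comap (fun q => hatDist (some q) (some p)) (𝓝 0) = 𝓝 p :=
  le_antisymm (tendsto_of_tendsto_hatDist tendsto_comap)
    (tendsto_iff_comap.mp (tendsto_hatDist_of_tendsto tendsto_id))

theorem stmt_8_general {X : Type*} [MetricSpace X]
    [m : MetricSpace (Option (ℝ≥0 × X))]
    (hm : ∀ p q : Option (ℝ≥0 × X), dist p q = hatDist p q) :
    TopologicalSpace.induced (fun p : ℝ≥0 × X => (some p : Option (ℝ≥0 × X)))
        (inferInstance : TopologicalSpace (Option (ℝ≥0 × X))) =
      (inferInstance : TopologicalSpace (ℝ≥0 × X)) := by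
  refine TopologicalSpace.ext_iff_nhds.mpr fun p => ?_
  rw [nhds_induced, ← nhds_comap_dist, comap_comap]
  simpa only [Function.comp_def, hm] using comap_hatDist_nhds_zero p

/-- The subspace topology induced by the metric `ρ̂` on `[0,∞) × X ⊂ X̂` coincides
with the product topology on `[0,∞) × X`. -/
theorem stmt_8 {X : Type*} [MetricSpace X] (hρ : ∀ x y : X, dist x y ≤ 2)
    [m : MetricSpace (Option (ℝ≥0 × X))]
    (hm : ∀ p q : Option (ℝ≥0 × X), dist p q = hatDist p q) :
    TopologicalSpace.induced (fun p : ℝ≥0 × X => (some p : Option (ℝ≥0 × X)))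
        (inferInstance : TopologicalSpace (Option (ℝ≥0 × X))) =
      (inferInstance : TopologicalSpace (ℝ≥0 × X)) :=
  stmt_8_general (m := m) hm
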